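/- arXiv:2603.05206 — 2 statements merged into one kernel-verified Lean document; each statement's English description precedes it below -/
import Mathlib

section
/- Let X be a finite-dimensional normed space of dimension ≥ 2, C ⊆ X a convex body, and x ∈ X \ C such that the cone c(x,C) is closed. Set Γ_C(x) = ∂[c(x,C)] ∩ C. Then for every y ∈ ∂C \ conv(Γ_C(x) ∪ {x}), the point x belongs to K(y,C), the intersection of all closed half-spaces [g ≤ g(y)] over norm-one functionals g supporting C at y. -/
/-- The cone with vertex `z` generated by `E`: `z + ℝ₊ · (E - z)`. -/
def vertexCone {X : Type*} [NormedAddCommGroup X] [NormedSpace ℝ X]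
    (z : X) (E : Set X) : Set X :=
  {x : X | ∃ t : ℝ, 0 ≤ t ∧ ∃ c ∈ E, x = z + t • (c - z)}

/-- `K(y,B)`: the intersection of all closed half-spaces `[g ≤ g y]` over norm-one
functionals `g` supporting `B` at `y`. -/
def Kset {X : Type*} [NormedAddCommGroup X] [NormedSpace ℝ X]
    (B : Set X) (y : X) : Set X :=
  ⋂ g ∈ {g : X →L[ℝ] ℝ | ‖g‖ = 1 ∧ ∀ z ∈ B, g z ≤ g y}, {z : X | g z ≤ g y}

/-!
Suppose a functional `g` supporting `C` at `y` had `g y < g x`, so that `g < g x` on `C`. The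
closed cone `K = c(x,C)` then contains no ray `y + ℝ₊ u` with `g u = 0`, `u ≠ 0`: closedness would
put `x + u` in `K`, i.e. `u = t (c - x)` with `c ∈ C`, and `g` is negative on `c - x`. Since
`dim X ≥ 2` such a `u` exists, so the line `y + ℝ u` meets `K` in a compact segment whose endpoints
lie on `∂K` at level `g y`. A point of `∂K` at a level below `g x` has the form `x + t (c - x)` with
`0 < t ≤ 1` and `c ∈ C ∩ ∂K`, so both endpoints, and hence `y`, lie in `conv (Γ_C(x) ∪ {x})`.
-/

open Set Filter Topology

theorem IsClosed.csSup_mem_frontier {α : Type*} [ConditionallyCompleteLinearOrder α]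
    [TopologicalSpace α] [OrderTopology α] [DenselyOrdered α] [NoMaxOrder α] {S : Set α}
    (hS : IsClosed S) (hne : S.Nonempty) (hbdd : BddAbove S) : sSup S ∈ frontier S := by
  rw [hS.frontier_eq]
  refine ⟨hS.csSup_mem hne hbdd, fun hint => ?_⟩
  obtain ⟨s, hlt, hs⟩ :=
    ((frequently_gt_nhds (sSup S)).and_eventually (mem_interior_iff_mem_nhds.mp hint)).exists
  exact (le_csSup hbdd hs).not_gt hlt

section Line

variable {X : Type*} [NormedAddCommGroup X] [NormedSpace ℝ X] {K : Set X} {y u : X}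

theorem Convex.line_preimage (hK : Convex ℝ K) (y u : X) :
    Convex ℝ {s : ℝ | y + s • u ∈ K} := by
  intro s₁ hs₁ s₂ hs₂ a b ha hb hab
  have hcomb := hK hs₁ hs₂ ha hb hab
  rwa [show a • (y + s₁ • u) + b • (y + s₂ • u) = (a + b) • y + (a * s₁ + b * s₂) • u by
    module, hab, one_smul] at hcomb

theorem Convex.add_smul_mem_of_not_bddAbove (hK : Convex ℝ K) (hy : y ∈ K)
    (h : ¬BddAbove {s : ℝ | y + s • u ∈ K}) : ∀ s : ℝ, 0 ≤ s → y + s • u ∈ K := by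
  intro s hs
  obtain ⟨t, ht, hst⟩ := not_bddAbove_iff.mp h s
  have h0 : (0 : ℝ) ∈ {s : ℝ | y + s • u ∈ K} := by simpa using hy
  exact (hK.line_preimage y u).ordConnected.out h0 ht ⟨hs, hst.le⟩

theorem IsClosed.exists_nonneg_add_smul_mem_frontier (hK : IsClosed K) (hy : y ∈ K)
    (hbdd : BddAbove {s : ℝ | y + s • u ∈ K}) : ∃ b : ℝ, 0 ≤ b ∧ y + b • u ∈ frontier K := by
  have hline : Continuous fun s : ℝ => y + s • u := by fun_prop
  have h0 : (0 : ℝ) ∈ {s : ℝ | y + s • u ∈ K} := by simpa using hy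
  exact ⟨_, le_csSup hbdd h0, hline.frontier_preimage_subset K <|
    (hK.preimage hline).csSup_mem_frontier ⟨0, h0⟩ hbdd⟩

end Line

section VertexCone

variable {X : Type*} [NormedAddCommGroup X] [NormedSpace ℝ X] {x y u : X} {C : Set X}

theorem subset_vertexCone : C ⊆ vertexCone x C :=
  fun c hc => ⟨1, zero_le_one, c, hc, by module⟩

theorem add_smul_sub_mem_vertexCone {k : X} (hk : k ∈ vertexCone x C) {t : ℝ} (ht : 0 ≤ t) :
    x + t • (k - x) ∈ vertexCone x C := by
  obtain ⟨s, hs, c, hc, rfl⟩ := hk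
  exact ⟨t * s, mul_nonneg ht hs, c, hc, by module⟩

theorem convex_vertexCone (hC : Convex ℝ C) : Convex ℝ (vertexCone x C) := by
  rintro p ⟨t₁, ht₁, c₁, hc₁, rfl⟩ q ⟨t₂, ht₂, c₂, hc₂, rfl⟩ a b ha hb hab
  have hT : 0 ≤ a * t₁ + b * t₂ := by positivity
  rcases hT.eq_or_lt with hT0 | hT0
  · have h₁ : a * t₁ = 0 := by nlinarith [mul_nonneg ha ht₁, mul_nonneg hb ht₂]
    have h₂ : b * t₂ = 0 := by nlinarith [mul_nonneg ha ht₁, mul_nonneg hb ht₂]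
    refine ⟨0, le_rfl, c₁, hc₁, ?_⟩
    rw [show a • (x + t₁ • (c₁ - x)) + b • (x + t₂ • (c₂ - x))
        = (a + b) • x + (a * t₁) • (c₁ - x) + (b * t₂) • (c₂ - x) by module, h₁, h₂, hab]
    simp
  · refine ⟨a * t₁ + b * t₂, hT, (a * t₁ / (a * t₁ + b * t₂)) • c₁ +
      (b * t₂ / (a * t₁ + b * t₂)) • c₂, hC hc₁ hc₂ (by positivity) (by positivity)
        (by field_simp), ?_⟩
    match_scalars
    · field_simp; linarith
    · field_simp
    · field_simp

theorem add_mem_vertexCone_of_ray (hK : IsClosed (vertexCone x C))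
    (hray : ∀ s : ℝ, 0 ≤ s → y + s • u ∈ vertexCone x C) : x + u ∈ vertexCone x C := by
  have hlim : Tendsto (fun t : ℝ => x + u + t • (y - x)) (𝓝[>] 0) (𝓝 (x + u)) := by
    refine tendsto_nhdsWithin_of_tendsto_nhds ?_
    simpa using (show Continuous fun t : ℝ => x + u + t • (y - x) by fun_prop).tendsto 0
  refine hK.mem_of_tendsto hlim ?_
  filter_upwards [self_mem_nhdsWithin] with t (ht : 0 < t)
  have hmem := add_smul_sub_mem_vertexCone (hray t⁻¹ (inv_nonneg.mpr ht.le)) ht.le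
  rwa [show x + t • (y + t⁻¹ • u - x) = x + u + t • (y - x) by
    simp only [smul_sub, smul_add, smul_smul, mul_inv_cancel₀ ht.ne', one_smul]; abel] at hmem

theorem eq_zero_of_ray_subset_vertexCone {g : X →L[ℝ] ℝ} (hK : IsClosed (vertexCone x C))
    (hgC : ∀ c ∈ C, g c < g x) (hu : g u = 0) (hray : ∀ s : ℝ, 0 ≤ s → y + s • u ∈ vertexCone x C) :
    u = 0 := by
  obtain ⟨t, ht, c, hc, hxu⟩ := add_mem_vertexCone_of_ray hK hray
  have hut : u = t • (c - x) := add_left_cancel hxu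
  have ht0 : t = 0 := by
    have : t * (g c - g x) = 0 := by simpa [hut] using hu
    nlinarith [hgC c hc]
  simpa [ht0] using hut

/-- Positive homotheties centred at `x` preserve the cone, hence its interior. -/
theorem mem_frontier_vertexCone_of_smul {c : X} (hc : c ∈ C) {t : ℝ} (ht : 0 < t)
    (hw : x + t • (c - x) ∈ frontier (vertexCone x C)) : c ∈ frontier (vertexCone x C) := by
  refine ⟨subset_closure (subset_vertexCone hc), fun hint => hw.2 ?_⟩
  have himage : AffineMap.homothety x t '' vertexCone x C ⊆ vertexCone x C := by
    rintro _ ⟨k, hk, rfl⟩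
    simpa [AffineMap.homothety_apply, add_comm] using add_smul_sub_mem_vertexCone hk ht.le
  have := interior_mono himage <|
    (AffineMap.homothety_isOpenMap x t ht.ne').image_interior_subset _ ⟨c, hint, rfl⟩
  simpa [AffineMap.homothety_apply, add_comm] using this

theorem mem_convexHull_of_mem_frontier_vertexCone {g : X →L[ℝ] ℝ} {α : ℝ} {w : X}
    (hK : IsClosed (vertexCone x C)) (hgC : ∀ c ∈ C, g c ≤ α) (hα : α < g x)
    (hw : w ∈ frontier (vertexCone x C)) (hgw : g w = α) :
    w ∈ convexHull ℝ ((frontier (vertexCone x C) ∩ C) ∪ {x}) := by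
  obtain ⟨t, ht, c, hc, rfl⟩ := hK.frontier_subset hw
  have hlevel : g x + t * (g c - g x) = α := by simpa [mul_sub] using hgw
  have ht0 : 0 < t := ht.lt_of_ne <| by rintro rfl; simp at hlevel; linarith
  have ht1 : t ≤ 1 := by nlinarith [hgC c hc]
  have hcF := mem_frontier_vertexCone_of_smul hc ht0 hw
  have hx : x ∈ convexHull ℝ ((frontier (vertexCone x C) ∩ C) ∪ {x}) :=
    subset_convexHull ℝ _ (Or.inr rfl)
  have hc : c ∈ convexHull ℝ ((frontier (vertexCone x C) ∩ C) ∪ {x}) :=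
    subset_convexHull ℝ _ (Or.inl ⟨hcF, hc⟩)
  rw [show x + t • (c - x) = (1 - t) • x + t • c by module]
  exact convex_convexHull ℝ _ hx hc (by linarith) ht (by ring)

end VertexCone

theorem stmt_10_general {X : Type*} [NormedAddCommGroup X] [NormedSpace ℝ X]
    [FiniteDimensional ℝ X] (hd : 2 ≤ Module.finrank ℝ X)
    (C : Set X) (hconv : Convex ℝ C)
    (x : X) (hcone : IsClosed (vertexCone x C)) :
    ∀ y ∈ frontier C \ convexHull ℝ ((frontier (vertexCone x C) ∩ C) ∪ {x}),
      x ∈ Kset C y := by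
  rintro y ⟨hyF, hy_hull⟩
  simp only [Kset, mem_iInter₂, mem_ofPred_eq]
  rintro g ⟨-, hgy⟩
  by_contra! hgx
  set H := convexHull ℝ ((frontier (vertexCone x C) ∩ C) ∪ {x})
  have hyK : y ∈ vertexCone x C :=
    closure_minimal subset_vertexCone hcone (frontier_subset_closure hyF)
  have hgC : ∀ c ∈ C, g c < g x := fun c hc => (hgy c hc).trans_lt hgx
  have hull_ray : ∀ v, g v = 0 → v ≠ 0 → ∃ b : ℝ, 0 ≤ b ∧ y + b • v ∈ H := by
    intro v hv hv0
    have hbdd : BddAbove {s : ℝ | y + s • v ∈ vertexCone x C} := by_contra fun h =>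
      hv0 <| eq_zero_of_ray_subset_vertexCone hcone hgC hv <|
        (convex_vertexCone hconv).add_smul_mem_of_not_bddAbove hyK h
    obtain ⟨b, hb, hbF⟩ := hcone.exists_nonneg_add_smul_mem_frontier hyK hbdd
    exact ⟨b, hb, mem_convexHull_of_mem_frontier_vertexCone hcone hgy hgx hbF (by simp [hv])⟩
  obtain ⟨u, hu : g u = 0, hu0⟩ := (Submodule.ne_bot_iff _).mp <|
    (g : X →ₗ[ℝ] ℝ).ker_ne_bot_of_finrank_lt (by rw [Module.finrank_self]; omega)
  obtain ⟨b, hb, hbH⟩ := hull_ray u hu hu0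
  obtain ⟨b', hb', hb'H⟩ := hull_ray (-u) (by simp [hu]) (neg_ne_zero.mpr hu0)
  rw [smul_neg, ← neg_smul] at hb'H
  have hy_mem : y + (0 : ℝ) • u ∈ H :=
    ((convex_convexHull ℝ _).line_preimage y u).ordConnected.out hb'H hbH ⟨by linarith, hb⟩
  exact hy_hull (by rwa [zero_smul, add_zero] at hy_mem)

theorem stmt_10 {X : Type*} [NormedAddCommGroup X] [NormedSpace ℝ X]
    [FiniteDimensional ℝ X] (hd : 2 ≤ Module.finrank ℝ X)
    (C : Set X) (hclosed : IsClosed C) (hconv : Convex ℝ C) (hne : C ≠ Set.univ)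
    (hint : (interior C).Nonempty)
    (x : X) (hx : x ∉ C) (hcone : IsClosed (vertexCone x C)) :
    ∀ y ∈ frontier C \ convexHull ℝ ((frontier (vertexCone x C) ∩ C) ∪ {x}),
      x ∈ Kset C y :=
  stmt_10_general hd C hconv x hcone
end

section
/- Let X be a finite-dimensional normed space of dimension ≥ 2 and C ⊆ X a convex body with no asymptotic directions. Let {B_n} be an increasing sequence of convex bodies contained in C with C = ⋃_n int_C B_n. Then X = ⋃_n e(B_n). -/
open Filter Metric Set Topology

/-- The relative boundary of `B` in the subspace topology of `C`. -/
def relBdry {X : Type*} [NormedAddCommGroup X] [NormedSpace ℝ X]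
    (C B : Set X) : Set X :=
  (C ∩ closure B) ∩ closure (C \ B)

/-- The relative interior of `B` in the subspace topology of `C`. -/
def relInt {X : Type*} [NormedAddCommGroup X] [NormedSpace ℝ X]
    (C B : Set X) : Set X :=
  C \ closure (C \ B)

/-- The extension `e(B)` of a convex body `B ⊆ C`. -/
def eExt {X : Type*} [NormedAddCommGroup X] [NormedSpace ℝ X]
    (C B : Set X) : Set X :=
  ⋂ y ∈ relBdry C B, Kset B y


/-- `v` is an asymptotic direction of the closed convex set `C`. -/
def IsAsymptoticDir {X : Type*} [NormedAddCommGroup X] [NormedSpace ℝ X]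
    (C : Set X) (v : X) : Prop :=
  v ≠ 0 ∧ ∃ x₀ : X,
    (∀ t : ℝ, 0 ≤ t → x₀ + t • v ∉ interior C) ∧
    Filter.Tendsto (fun t : ℝ => Metric.infDist (x₀ + t • v) C) Filter.atTop (nhds 0)


/-! Suppose `x` lies outside every `e(B n)`: there are `y n ∈ ∂_C B n` and norm-one functionals
`g n` supporting `B n` at `y n` with `g n (y n) < g n x`. As `C` is covered by the relative interiors
of the `B n`, `y n` escapes to infinity, while `g n (y n)` stays between `g n z₀` (for a fixed
`z₀ ∈ B 0`) and `g n x`. A limit `(v, g)` of `(y n / ‖y n‖, g n)` is then a recession direction `v`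
of `C` and a nonzero functional `g`, bounded above on `C`, with `g v = 0`. If `v` were not
asymptotic, the points whose `v`-ray enters `int C` would form a nonempty clopen set, so every
`v`-ray would enter `C`; but `g` is constant along `v`-rays and unbounded above. -/

def IsRecessionDir {X : Type*} [AddCommGroup X] [Module ℝ X] (W : Set X) (v : X) : Prop :=
  ∀ z ∈ W, ∀ t : ℝ, 0 ≤ t → z + t • v ∈ W

section

variable {X : Type*} [NormedAddCommGroup X] [NormedSpace ℝ X]

theorem relInt_subset (C B : Set X) : relInt C B ⊆ B := fun _ hz =>
  by_contra fun hzB => hz.2 (subset_closure ⟨hz.1, hzB⟩)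

theorem notMem_eExt_iff {C B : Set X} {x : X} :
    x ∉ eExt C B ↔ ∃ y ∈ relBdry C B, ∃ g : X →L[ℝ] ℝ,
      ‖g‖ = 1 ∧ (∀ z ∈ B, g z ≤ g y) ∧ g y < g x := by
  simp only [eExt, Kset, mem_iInter, mem_ofPred_eq, not_forall, not_le, exists_prop, and_assoc]

theorem tendsto_cocompact_of_mem_relBdry {C : Set X} (hC : IsClosed C) {B : ℕ → Set X}
    (hB : Monotone B) (hcover : C ⊆ ⋃ n, relInt C (B n)) {y : ℕ → X}
    (hy : ∀ n, y n ∈ relBdry C (B n)) : Tendsto y atTop (cocompact X) := by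
  refine hasBasis_cocompact.tendsto_right_iff.2 fun K hK => ?_
  have hanti : Antitone fun n => closure (C \ B n) := fun _ _ h =>
    closure_mono (sdiff_subset_sdiff_right (hB h))
  obtain ⟨m, hm⟩ := (hK.inter_left hC).elim_directed_cover (fun n => (closure (C \ B n))ᶜ)
    (fun _ => isClosed_closure.isOpen_compl) (fun z hz => by simpa [relInt, hz.1] using hcover hz.1)
    (Monotone.directed_le fun _ _ h => compl_subset_compl.2 (hanti h))
  filter_upwards [eventually_ge_atTop m] with n hn hyK
  exact hm ⟨(hy n).1.1, hyK⟩ (hanti hn (hy n).2)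

namespace IsRecessionDir

variable {W : Set X} {v : X}

theorem tendsto_infDist (hrec : IsRecessionDir W v) {x : X}
    (hx : x ∈ closure {y | ∃ t : ℝ, 0 ≤ t ∧ y + t • v ∈ W}) :
    Tendsto (fun t : ℝ => infDist (x + t • v) W) atTop (𝓝 0) := by
  refine Metric.tendsto_atTop.2 fun ε hε => ?_
  obtain ⟨y, ⟨s, -, hyW⟩, hxy⟩ := Metric.mem_closure_iff.1 hx ε hε
  refine ⟨s, fun t hst => ?_⟩
  have hyt : y + t • v ∈ W := by
    simpa [add_assoc, ← add_smul] using hrec _ hyW (t - s) (sub_nonneg.2 hst)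
  rw [Real.dist_0_eq_abs, abs_of_nonneg infDist_nonneg]
  calc infDist (x + t • v) W ≤ dist (x + t • v) (y + t • v) := infDist_le_dist_of_mem hyt
    _ = dist x y := dist_add_right _ _ _
    _ < ε := hxy

theorem exists_add_smul_mem_interior (hrec : IsRecessionDir W v) (hv : v ≠ 0)
    (hna : ¬ IsAsymptoticDir W v) (hW : W.Nonempty) (x : X) :
    ∃ t : ℝ, 0 ≤ t ∧ x + t • v ∈ interior W := by
  set Z := {y | ∃ t : ℝ, 0 ≤ t ∧ y + t • v ∈ interior W}
  have hclosure : closure {y | ∃ t : ℝ, 0 ≤ t ∧ y + t • v ∈ W} ⊆ Z := fun y hy => by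
    by_contra hyZ
    simp only [Z, mem_ofPred_eq, not_exists, not_and] at hyZ
    exact hna ⟨hv, y, hyZ, hrec.tendsto_infDist hy⟩
  have hZ_open : IsOpen Z := by
    have hZ : Z = ⋃ t ≥ (0 : ℝ), (· + t • v) ⁻¹' interior W := by ext; simp [Z]
    rw [hZ]
    exact isOpen_biUnion fun t _ => isOpen_interior.preimage (continuous_add_const _)
  have hZW : Z ⊆ {y | ∃ t : ℝ, 0 ≤ t ∧ y + t • v ∈ W} := fun _ ⟨t, ht, hy⟩ =>
    ⟨t, ht, interior_subset hy⟩
  have hZ_closed : IsClosed Z := isClosed_of_closure_subset ((closure_mono hZW).trans hclosure)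
  obtain ⟨w, hw⟩ := hW
  have hwZ : w ∈ Z := hclosure (subset_closure ⟨0, le_rfl, by simpa using hw⟩)
  exact (IsClopen.eq_univ ⟨hZ_closed, hZ_open⟩ ⟨w, hwZ⟩).ge (mem_univ x)

theorem isAsymptoticDir (hrec : IsRecessionDir W v) (hv : v ≠ 0) (hW : W.Nonempty)
    {g : X →L[ℝ] ℝ} (hg : g ≠ 0) (hgv : g v = 0) {M : ℝ} (hM : ∀ z ∈ W, g z ≤ M) :
    IsAsymptoticDir W v := by
  by_contra hna
  obtain ⟨x, hx⟩ := LinearMap.surjective_of_ne_zero (f := (g : X →ₗ[ℝ] ℝ))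
    (by simpa using ContinuousLinearMap.coe_injective.ne hg) (M + 1)
  obtain ⟨t, -, ht⟩ := hrec.exists_add_smul_mem_interior hv hna hW x
  have := hM _ (interior_subset ht)
  simp only [map_add, map_smul, hgv, smul_zero, add_zero] at this
  simp only [ContinuousLinearMap.coe_coe] at hx
  linarith

end IsRecessionDir

theorem Convex.isRecessionDir_of_tendsto {C : Set X} (hconv : Convex ℝ C) (hC : IsClosed C)
    {ι : Type*} {l : Filter ι} [l.NeBot] {y : ι → X} {c : ι → ℝ} {v : X}
    (hy : ∀ i, y i ∈ C) (hc : Tendsto c l (𝓝[≥] 0)) (hv : Tendsto (fun i => c i • y i) l (𝓝 v)) :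
    IsRecessionDir C v := by
  intro z hz t ht
  obtain ⟨hc0, hc_nonneg⟩ := tendsto_nhdsWithin_iff.1 hc
  have hlim : Tendsto (fun i => z + (t * c i) • (y i - z)) l (𝓝 (z + t • v)) := by
    have := tendsto_const_nhds (x := z) |>.add
      ((hv.const_smul t).sub ((hc0.const_mul t).smul_const z))
    simpa [smul_sub, mul_smul] using this
  refine hC.mem_of_tendsto hlim ?_
  filter_upwards [hc_nonneg, (hc0.const_mul t).eventually (gt_mem_nhds (by simp : t * 0 < 1))]
    with i hci hti
  exact hconv.add_smul_sub_mem hz (hy i) ⟨mul_nonneg ht hci, hti.le⟩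

theorem exists_isAsymptoticDir_of_supporting [FiniteDimensional ℝ X] {C : Set X}
    (hC : IsClosed C) (hconv : Convex ℝ C) {y : ℕ → X} {g : ℕ → X →L[ℝ] ℝ} {M : ℝ}
    (hyC : ∀ n, y n ∈ C) (hy : Tendsto (fun n => ‖y n‖) atTop atTop) (hg : ∀ n, ‖g n‖ = 1)
    (hM : ∀ n, |g n (y n)| ≤ M) (hsupp : ∀ z ∈ C, ∀ᶠ n in atTop, g n z ≤ g n (y n)) :
    ∃ v, IsAsymptoticDir C v := by
  obtain ⟨⟨v, g₀⟩, -, φ, hφ, hlim⟩ := tendsto_subseq_of_bounded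
    ((isBounded_closedBall (x := 0) (r := 1)).prod (isBounded_closedBall (x := 0) (r := 1)))
    (x := fun n => (‖y n‖⁻¹ • y n, g n)) fun n => mk_mem_prod
      (by simpa [norm_smul] using inv_mul_le_one (a := ‖y n‖)) (by simp [hg n])
  have hyφ : Tendsto (fun n => ‖y (φ n)‖) atTop atTop := hy.comp hφ.tendsto_atTop
  have hu : Tendsto (fun n => ‖y (φ n)‖⁻¹ • y (φ n)) atTop (𝓝 v) :=
    (continuous_fst.tendsto _).comp hlim
  have hgφ : Tendsto (fun n => g (φ n)) atTop (𝓝 g₀) := (continuous_snd.tendsto _).comp hlim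
  have hv : v ≠ 0 := by
    have : ‖v‖ = 1 := tendsto_nhds_unique hu.norm <| tendsto_const_nhds.congr' <|
      (hyφ.eventually_gt_atTop 0).mono fun n hn => (norm_smul_inv_norm (norm_pos_iff.1 hn)).symm
    rintro rfl
    simp at this
  have hg₀ : g₀ ≠ 0 := by
    have : ‖g₀‖ = 1 := tendsto_nhds_unique hgφ.norm (by simp [hg])
    rintro rfl
    simp at this
  have hrec : IsRecessionDir C v := hconv.isRecessionDir_of_tendsto hC (fun n => hyC (φ n))
    (tendsto_nhdsWithin_iff.2 ⟨hyφ.inv_tendsto_atTop, .of_forall fun n => by simp⟩) hu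
  have hbdd : ∀ z ∈ C, g₀ z ≤ M := fun z hz =>
    le_of_tendsto (((continuous_snd.clm_apply continuous_const).tendsto _).comp hlim) <|
      (hφ.tendsto_atTop.eventually (hsupp z hz)).mono fun n hn => hn.trans (abs_le.1 (hM _)).2
  have hgv : g₀ v = 0 := by
    refine tendsto_nhds_unique (((continuous_snd.clm_apply continuous_fst).tendsto _).comp hlim) ?_
    refine squeeze_zero_norm (fun n => ?_) (by simpa using hyφ.inv_tendsto_atTop.mul_const M)
    change ‖g (φ n) (‖y (φ n)‖⁻¹ • y (φ n))‖ ≤ _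
    rw [map_smul, smul_eq_mul, norm_mul, norm_inv, norm_norm, Real.norm_eq_abs]
    exact mul_le_mul_of_nonneg_left (hM _) (inv_nonneg.2 (norm_nonneg _))
  exact ⟨v, hrec.isAsymptoticDir hv ⟨_, hyC 0⟩ hg₀ hgv hbdd⟩

end

theorem stmt_17_general {X : Type*} [NormedAddCommGroup X] [NormedSpace ℝ X]
    [FiniteDimensional ℝ X]
    (C : Set X) (hclosed : IsClosed C) (hconv : Convex ℝ C)
    (hnoasym : ∀ v : X, ¬ IsAsymptoticDir C v)
    (B : ℕ → Set X)
    (hB : ∀ n, IsClosed (B n) ∧ Convex ℝ (B n) ∧ B n ≠ Set.univ ∧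
      (interior (B n)).Nonempty ∧ B n ⊆ C)
    (hmono : ∀ n, B n ⊆ B (n + 1))
    (hcover : C = ⋃ n, relInt C (B n)) :
    Set.univ = ⋃ n, eExt C (B n) := by
  obtain ⟨z₀, hz₀⟩ := (hB 0).2.2.2.1.mono interior_subset
  have hBmono : Monotone B := monotone_nat_of_le_succ hmono
  refine (eq_univ_of_forall fun x => ?_).symm
  by_contra hx
  simp only [mem_iUnion, not_exists] at hx
  choose y hy g hg hsupp hlt using fun n => notMem_eExt_iff.1 (hx n)
  have hle : ∀ n w, |g n w| ≤ ‖w‖ := fun n w => by simpa [hg n] using (g n).le_opNorm w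
  have hM : ∀ n, |g n (y n)| ≤ ‖z₀‖ + ‖x‖ := fun n => abs_le.2
    ⟨by linarith [neg_le_of_abs_le (hle n z₀), hsupp n z₀ (hBmono n.zero_le hz₀), norm_nonneg x],
      by linarith [le_of_abs_le (hle n x), hlt n, norm_nonneg z₀]⟩
  have hsuppC : ∀ z ∈ C, ∀ᶠ n in atTop, g n z ≤ g n (y n) := fun z hz => by
    obtain ⟨m, hm⟩ := mem_iUnion.1 (hcover ▸ hz)
    exact eventually_atTop.2 ⟨m, fun n hn => hsupp n z (hBmono hn (relInt_subset _ _ hm))⟩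
  have hy_tendsto := tendsto_cocompact_of_mem_relBdry hclosed hBmono hcover.subset hy
  obtain ⟨v, hv⟩ := exists_isAsymptoticDir_of_supporting hclosed hconv (fun n => (hy n).1.1)
    (tendsto_norm_cocompact_atTop.comp hy_tendsto) hg hM hsuppC
  exact hnoasym v hv

theorem stmt_17 {X : Type*} [NormedAddCommGroup X] [NormedSpace ℝ X]
    [FiniteDimensional ℝ X] (hd : 2 ≤ Module.finrank ℝ X)
    (C : Set X) (hclosed : IsClosed C) (hconv : Convex ℝ C) (hne : C ≠ Set.univ)
    (hint : (interior C).Nonempty)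
    (hnoasym : ∀ v : X, ¬ IsAsymptoticDir C v)
    (B : ℕ → Set X)
    (hB : ∀ n, IsClosed (B n) ∧ Convex ℝ (B n) ∧ B n ≠ Set.univ ∧
      (interior (B n)).Nonempty ∧ B n ⊆ C)
    (hmono : ∀ n, B n ⊆ B (n + 1))
    (hcover : C = ⋃ n, relInt C (B n)) :
    Set.univ = ⋃ n, eExt C (B n) :=
  stmt_17_general C hclosed hconv hnoasym B hB hmono hcover
end
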